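/- If Σ is arboreous, then V_Ê ⊆ Ĉ: every existential variable of every Ê-tgd lies in the unique maximal-rank SCC Ĉ of ledgraph(Σ). -/

import Mathlib

/- Formalization of the framework of "Chase Termination Beyond Polynomial Time":
   terms, atoms, tgds, the Datalog-first standard chase, the labelled existential
   dependency graph, path queries, propagation, saturation, ranks, and term trees. -/

namespace ChasePaper

/-- Terms built from countably many constants, variables, and nulls. -/
inductive Term : Type
  | const : ℕ → Term
  | var : ℕ → Term
  | null : ℕ → Term
  deriving DecidableEq

/-- Atoms: a predicate applied to a list of terms (the arity of the predicate
being the length of the argument list). -/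
structure Atom : Type where
  pred : ℕ
  args : List Term
  deriving DecidableEq

def Atom.vars (a : Atom) : Set ℕ := { x | Term.var x ∈ a.args }

/-- Application of a substitution (acting on variables) to a term. -/
def Term.subst (σ : ℕ → Term) : Term → Term
  | Term.var x => σ x
  | t => t

def Atom.subst (σ : ℕ → Term) (a : Atom) : Atom := ⟨a.pred, a.args.map (Term.subst σ)⟩

/-- A substitution is ground if it never yields a variable. -/
def GroundSub (σ : ℕ → Term) : Prop := ∀ x y : ℕ, σ x ≠ Term.var y

/-- A tuple-generating dependency `B[x,y] → ∃v. H[y,v]`, represented by its body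
and head; universal, frontier, and existential variables are derived. -/
structure TGD : Type where
  body : Finset Atom
  head : Finset Atom
  deriving DecidableEq

def TGD.bodyVars (ρ : TGD) : Set ℕ := { x | ∃ a ∈ ρ.body, x ∈ a.vars }
def TGD.headVars (ρ : TGD) : Set ℕ := { x | ∃ a ∈ ρ.head, x ∈ a.vars }
/-- the frontier variables `y⃗` -/
def TGD.frontier (ρ : TGD) : Set ℕ := ρ.bodyVars ∩ ρ.headVars
/-- the existentially quantified variables `v⃗` -/
def TGD.exVars (ρ : TGD) : Set ℕ := ρ.headVars \ ρ.bodyVars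
def TGD.allVars (ρ : TGD) : Set ℕ := ρ.bodyVars ∪ ρ.headVars
def TGD.isDatalog (ρ : TGD) : Prop := ρ.exVars = ∅

/-- `σ` is a match of the body of `ρ` in `I`. -/
def BodyMatch (I : Set Atom) (ρ : TGD) (σ : ℕ → Term) : Prop :=
  GroundSub σ ∧ ∀ a ∈ ρ.body, a.subst σ ∈ I

/-- The match `σ` of `ρ` is satisfied in `I`. -/
def MatchSatisfied (I : Set Atom) (ρ : TGD) (σ : ℕ → Term) : Prop :=
  ∃ σ' : ℕ → Term, GroundSub σ' ∧ (∀ x ∈ ρ.bodyVars, σ' x = σ x) ∧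
    ∀ a ∈ ρ.head, a.subst σ' ∈ I

def SatTGD (I : Set Atom) (ρ : TGD) : Prop := ∀ σ, BodyMatch I ρ σ → MatchSatisfied I ρ σ

/-- A database: a finite set of variable-free, null-free atoms. -/
def IsDatabase (D : Set Atom) : Prop :=
  D.Finite ∧ ∀ a ∈ D, ∀ t ∈ a.args, ∃ c : ℕ, t = Term.const c

def termsOf (I : Set Atom) : Set Term := { t | ∃ a ∈ I, t ∈ a.args }

/-- Data of a single chase step: the applied tgd, the match, and the extended match. -/
structure Step : Type where
  rule : TGD
  m : ℕ → Term
  mx : ℕ → Term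

/-- A Datalog-first standard chase sequence for the tgd set `S` and database `D`. -/
structure ChaseSeq (S : Finset TGD) (D : Set Atom) : Type where
  seq : ℕ → Set Atom
  step : ℕ → Option Step
  init : seq 0 = D
  app : ∀ i st, step i = some st →
    st.rule ∈ S ∧
    BodyMatch (seq i) st.rule st.m ∧
    ¬ MatchSatisfied (seq i) st.rule st.m ∧
    (∀ x ∈ st.rule.bodyVars, st.mx x = st.m x) ∧
    (∀ v ∈ st.rule.exVars, ∃ n : ℕ, st.mx v = Term.null n ∧ Term.null n ∉ termsOf (seq i)) ∧
    (∀ v ∈ st.rule.exVars, ∀ w ∈ st.rule.exVars, st.mx v = st.mx w → v = w) ∧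
    seq (i + 1) = seq i ∪ { a | ∃ b ∈ st.rule.head, a = b.subst st.mx } ∧
    (st.rule.exVars ≠ ∅ → ∀ ρ ∈ S, ρ.isDatalog → SatTGD (seq i) ρ)
  halt : ∀ i, step i = none → seq (i + 1) = seq i ∧ ∀ ρ ∈ S, SatTGD (seq i) ρ
  fair : ∀ i, ∀ ρ ∈ S, ∀ σ, BodyMatch (seq i) ρ σ → ∃ j, i < j ∧ MatchSatisfied (seq j) ρ σ

def chase {S : Finset TGD} {D : Set Atom} (cs : ChaseSeq S D) : Set Atom := ⋃ i, cs.seq i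

def chaseTerms {S : Finset TGD} {D : Set Atom} (cs : ChaseSeq S D) : Set Term :=
  termsOf (chase cs)

/-- The null `n` is introduced at step `i` (with step data `st`) as the fresh value of
the existential variable `v`. -/
def IntroducedAt {S : Finset TGD} {D : Set Atom} (cs : ChaseSeq S D) (n i : ℕ) (st : Step)
    (v : ℕ) : Prop :=
  cs.step i = some st ∧ v ∈ st.rule.exVars ∧ st.mx v = Term.null n

/-- `var(n) = v`. -/
def NullVar {S : Finset TGD} {D : Set Atom} (cs : ChaseSeq S D) (n v : ℕ) : Prop :=
  ∃ i st, IntroducedAt cs n i st v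

/-- Chase edge `t →_y n`. -/
def ChaseEdge {S : Finset TGD} {D : Set Atom} (cs : ChaseSeq S D) (t : Term) (y n : ℕ) : Prop :=
  ∃ i st v, IntroducedAt cs n i st v ∧ y ∈ st.rule.frontier ∧ st.m y = t

/-- The variables of the tgds in `S` are renamed apart. -/
def RenamedApart (S : Finset TGD) : Prop :=
  ∀ ρ₁ ∈ S, ∀ ρ₂ ∈ S, ρ₁ ≠ ρ₂ → ρ₁.allVars ∩ ρ₂.allVars = ∅

/-- A predicate position `⟨p, i⟩`. -/
abbrev Pos := ℕ × ℕ

def posIn (x : ℕ) (A : Finset Atom) : Set Pos :=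
  { pq | ∃ a ∈ A, a.pred = pq.1 ∧ a.args[pq.2]? = some (Term.var x) }

/-- positions of `x` in the body of `ρ` -/
def posB (ρ : TGD) (x : ℕ) : Set Pos := posIn x ρ.body
/-- positions of `x` in the head of `ρ` -/
def posH (ρ : TGD) (x : ℕ) : Set Pos := posIn x ρ.head

/-- `Ω_v` for the existential variable `v` of the tgd `ρv`: the smallest set of positions
containing `posH ρv v` and closed under propagation through universal variables. -/
inductive Omega (S : Finset TGD) (ρv : TGD) (v : ℕ) : Pos → Prop
  | base : ∀ {pq}, pq ∈ posH ρv v → Omega S ρv v pq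
  | step : ∀ {ρ : TGD} {x : ℕ} {pq}, ρ ∈ S → x ∈ ρ.bodyVars →
      (∀ q ∈ posB ρ x, Omega S ρv v q) → pq ∈ posH ρ x → Omega S ρv v pq

/-- `v` is a vertex of `ledgraph(S)`. -/
def LVertex (S : Finset TGD) (v : ℕ) : Prop := ∃ ρ ∈ S, v ∈ ρ.exVars

/-- Edge `v →_y w` of the labelled existential dependency graph `ledgraph(S)`. -/
def LEdge (S : Finset TGD) (v y w : ℕ) : Prop :=
  ∃ ρv ∈ S, ∃ ρw ∈ S, v ∈ ρv.exVars ∧ w ∈ ρw.exVars ∧ y ∈ ρw.frontier ∧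
    ∀ pq ∈ posB ρw y, Omega S ρv v pq

def LEdgeAny (S : Finset TGD) (v w : ℕ) : Prop := ∃ y, LEdge S v y w

/-- `ledgraph(S)` is acyclic. -/
def LAcyclic (S : Finset TGD) : Prop := ∀ v, ¬ Relation.TransGen (LEdgeAny S) v v

def LReach (S : Finset TGD) : ℕ → ℕ → Prop := Relation.ReflTransGen (LEdgeAny S)

/-- The strongly connected component of `v` in `ledgraph(S)`. -/
def scc (S : Finset TGD) (v : ℕ) : Set ℕ := { u | LReach S u v ∧ LReach S v u }

/-- A path `v₀ →_{y₁} v₁ →_{y₂} ⋯ →_{y_len} v_len` in `ledgraph(S)`, together with,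
for each `1 ≤ i ≤ len`, the tgd of the vertex `v_i`. -/
structure LPath (S : Finset TGD) : Type where
  len : ℕ
  vtx : ℕ → ℕ
  lab : ℕ → ℕ
  tgd : ℕ → TGD
  edge : ∀ i, 1 ≤ i → i ≤ len → LEdge S (vtx (i - 1)) (lab i) (vtx i)
  mem : ∀ i, 1 ≤ i → i ≤ len → tgd i ∈ S ∧ vtx i ∈ (tgd i).exVars ∧ lab i ∈ (tgd i).frontier

/-- The renamed variable `ỹ_j` of the path query: `ỹ_j` is the copy of the frontier
variable `y_j` in the `j`-th copied tgd, and `ỹ_{len+1}` is a fresh variable. -/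
def ytil {S : Finset TGD} (p : LPath S) (j : ℕ) : ℕ :=
  if j ≤ p.len then Nat.pair j (p.lab j) else Nat.pair j 0

/-- Renaming of the variables of the `i`-th copied tgd (body). -/
def bodyRen (i : ℕ) : ℕ → Term := fun x => Term.var (Nat.pair i x)

/-- Renaming of the variables of the `i`-th copied tgd (head), where the existential
variable `v_i` is replaced by `ỹ_{i+1}`. -/
def headRen {S : Finset TGD} (p : LPath S) (i : ℕ) : ℕ → Term :=
  fun x => if x = p.vtx i then Term.var (ytil p (i + 1)) else Term.var (Nat.pair i x)

/-- The atoms of the conjunctive query `Path(𝔭) = ⋀ᵢ (Bᵢ ∧ Hᵢ[ṽᵢ/ỹᵢ₊₁])`. -/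
def pathAtoms {S : Finset TGD} (p : LPath S) : Set Atom :=
  { a | ∃ i, 1 ≤ i ∧ i ≤ p.len ∧
      ((∃ b ∈ (p.tgd i).body, a = b.subst (bodyRen i)) ∨
       (∃ b ∈ (p.tgd i).head, a = b.subst (headRen p i))) }

/-- The Datalog rules of `S` entail the rule `B → H` (all variables of `H` occur in `B`). -/
def DatalogEntails (S : Finset TGD) (B H : Set Atom) : Prop :=
  ∀ I : Set Atom, (∀ ρ ∈ S, ρ.isDatalog → SatTGD I ρ) →
    ∀ σ : ℕ → Term, GroundSub σ → (∀ a ∈ B, a.subst σ ∈ I) → ∀ a ∈ H, a.subst σ ∈ I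

/-- Substitution producing `H*[ỹ_{ℓ+1}, z̃⃗₁, ỹ₂, w̃⃗₁]` from the head of the first tgd
of the path. -/
def basePropSub {S : Finset TGD} (p : LPath S) : ℕ → Term :=
  fun x =>
    if x = p.lab 1 then Term.var (ytil p (p.len + 1))
    else if x = p.vtx 1 then Term.var (ytil p 2)
    else Term.var (Nat.pair 1 x)

/-- The path `𝔭` (starting with an edge `u* →_{y*} v*`) is base-propagating. -/
def BasePropagating {S : Finset TGD} (p : LPath S) : Prop :=
  DatalogEntails S (pathAtoms p) { a | ∃ b ∈ (p.tgd 1).head, a = b.subst (basePropSub p) }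

/-- Substitution producing `H*[ỹ_{l+1}, x⃗_z, ỹ₂, x⃗_w]` (fresh variables `Nat.pair 0 _`). -/
def stepPremSub {S : Finset TGD} (p : LPath S) (l ystar vstar : ℕ) : ℕ → Term :=
  fun x =>
    if x = ystar then Term.var (ytil p (l + 1))
    else if x = vstar then Term.var (ytil p 2)
    else Term.var (Nat.pair 0 x)

/-- Substitution producing `H*[ỹ_{l+k+1}, x⃗_z, ỹ_{l+2}, x⃗_w]`. -/
def stepConcSub {S : Finset TGD} (p : LPath S) (l ystar vstar : ℕ) : ℕ → Term :=
  fun x =>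
    if x = ystar then Term.var (ytil p (p.len + 1))
    else if x = vstar then Term.var (ytil p (l + 2))
    else Term.var (Nat.pair 0 x)

/-- The composite path `p = 𝔭^a 𝔭^b` (with `𝔭^a` of length `l`) is step-propagating for
the edge `u* →_{ystar} vstar` whose tgd is `ρstar`. -/
def StepPropagating {S : Finset TGD} (p : LPath S) (l : ℕ) (ρstar : TGD)
    (ystar vstar : ℕ) : Prop :=
  DatalogEntails S
    (pathAtoms p ∪ { a | ∃ b ∈ ρstar.head, a = b.subst (stepPremSub p l ystar vstar) })
    { a | ∃ b ∈ ρstar.head, a = b.subst (stepConcSub p l ystar vstar) }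

/-- A labelled edge `(u, y, v)`, i.e. `u →_y v`. -/
abbrev EdgeSet := Set (ℕ × ℕ × ℕ)

def EdgeInC (S : Finset TGD) (C : Set ℕ) (e : ℕ × ℕ × ℕ) : Prop :=
  e.1 ∈ C ∧ e.2.2 ∈ C ∧ LEdge S e.1 e.2.1 e.2.2

/-- The strongly connected component `C` is `E`-saturating. -/
def ESaturating (S : Finset TGD) (C : Set ℕ) (E : EdgeSet) : Prop :=
  (∀ e ∈ E, EdgeInC S C e) ∧
  -- (1) C without the edges of E is acyclic
  (∀ v, ¬ Relation.TransGen
      (fun a b => a ∈ C ∧ b ∈ C ∧ ∃ y, LEdge S a y b ∧ (a, y, b) ∉ E) v v) ∧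
  -- (2) E-edges with a common target carry the same label
  (∀ u x v u' x', (u, x, v) ∈ E → (u', x', v) ∈ E → x = x') ∧
  -- (3) every path e𝔭 with e ∈ E and 𝔭 an Ē-path is base-propagating
  (∀ p : LPath S, 1 ≤ p.len →
    (∀ i ≤ p.len, p.vtx i ∈ C) →
    (p.vtx 0, p.lab 1, p.vtx 1) ∈ E →
    (∀ i, 2 ≤ i → i ≤ p.len → (p.vtx (i - 1), p.lab i, p.vtx i) ∉ E) →
    (∃ e ∈ E, e.1 = p.vtx p.len) →
    BasePropagating p) ∧
  -- (4) every path e^a 𝔭₁ e^b 𝔭₂ with e^a, e^b ∈ E and 𝔭₁, 𝔭₂ Ē-paths is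
  --     step-propagating for every e ∈ E
  (∀ p : LPath S, ∀ l, 1 ≤ l → l < p.len →
    (∀ i ≤ p.len, p.vtx i ∈ C) →
    (p.vtx 0, p.lab 1, p.vtx 1) ∈ E →
    (p.vtx l, p.lab (l + 1), p.vtx (l + 1)) ∈ E →
    (∀ i, 2 ≤ i → i ≤ l → (p.vtx (i - 1), p.lab i, p.vtx i) ∉ E) →
    (∀ i, l + 2 ≤ i → i ≤ p.len → (p.vtx (i - 1), p.lab i, p.vtx i) ∉ E) →
    (∃ e ∈ E, e.1 = p.vtx p.len) →
    ∀ e ∈ E, ∀ ρstar ∈ S, e.2.2 ∈ ρstar.exVars →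
      StepPropagating p l ρstar e.2.1 e.2.2)

/-- `S` is saturating: every strongly connected component of `ledgraph(S)` is
`E`-saturating for some `E`. -/
def Saturating (S : Finset TGD) : Prop :=
  ∀ v, LVertex S v → ∃ E : EdgeSet, ESaturating S (scc S v) E

/-- `λ(v)`: the labels of edges into `v` from within its own SCC. -/
def labelSet (S : Finset TGD) (v : ℕ) : Set ℕ := { x | ∃ u ∈ scc S v, LEdge S u x v }

/-- `conf(v)`. -/
noncomputable def conf (S : Finset TGD) (v : ℕ) : ℕ := (labelSet S v).ncard

/-- `conf(C)`. -/
noncomputable def confC (S : Finset TGD) (C : Set ℕ) : ℕ := sSup (conf S '' C)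

/-- `t` is a `C`-input of the chase. -/
def CInput {S : Finset TGD} {D : Set Atom} (cs : ChaseSeq S D) (C : Set ℕ) (t : Term) : Prop :=
  t ∈ chaseTerms cs ∧
    ((∃ c, t = Term.const c) ∨
     ∃ n v, t = Term.null n ∧ NullVar cs n v ∧ v ∉ C ∧ ∃ x w, w ∈ C ∧ LEdge S v x w)

/-- `m 0 → m 1 → ⋯ → m k` is a chain of chase edges all of whose nulls belong
(via `var`) to `C`. -/
def CChain {S : Finset TGD} {D : Set Atom} (cs : ChaseSeq S D) (C : Set ℕ)
    (k : ℕ) (m : ℕ → ℕ) : Prop :=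
  (∀ i ≤ k, ∃ v ∈ C, NullVar cs (m i) v) ∧
  (∀ i, 1 ≤ i → i ≤ k → ∃ x, ChaseEdge cs (Term.null (m (i - 1))) x (m i))

/-- The null `n` has `C`-depth at most `d`. -/
def CDepthLe {S : Finset TGD} {D : Set Atom} (cs : ChaseSeq S D) (C : Set ℕ)
    (n d : ℕ) : Prop :=
  (∃ v ∈ C, NullVar cs n v) ∧ ∀ k m, CChain cs C k m → m k = n → k ≤ d

/-- Vertices of SCCs that are direct `≺`-predecessors of `scc v`. -/
def InPred (S : Finset TGD) (v : ℕ) : Set ℕ :=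
  { u | LVertex S u ∧ u ∉ scc S v ∧ ∃ y w, w ∈ scc S v ∧ LEdge S u y w }

/-- Vertices of the SCCs in `𝒞_cxt` for `scc v` (w.r.t. the chosen edge sets `EC`). -/
def CxtPred (S : Finset TGD) (EC : ℕ → EdgeSet) (v : ℕ) : Set ℕ :=
  { u | ∃ v' w x y, v' ∈ scc S v ∧ w ∈ scc S v ∧ (w, x, v') ∈ EC v ∧
      LEdge S u y v' ∧ x ≠ y }

/-- A choice of edge sets `EC` (constant on SCCs, making every SCC saturating) and a
rank function (constant on SCCs) satisfying the defining equations of Definition 5.3. -/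
def RankSystem (S : Finset TGD) (EC : ℕ → EdgeSet) (rank : ℕ → ℕ) : Prop :=
  (∀ v, LVertex S v → ESaturating S (scc S v) (EC v)) ∧
  (∀ u v : ℕ, u ∈ scc S v → EC u = EC v) ∧
  (∀ u v : ℕ, u ∈ scc S v → rank u = rank v) ∧
  (∀ v, LVertex S v →
    rank v =
      if confC S (scc S v) = 0 then sSup (insert 0 (rank '' InPred S v))
      else if confC S (scc S v) = 1 then
        max (sSup (insert 0 (rank '' InPred S v)))
          (sSup (insert 0 (rank '' CxtPred S EC v)) + 1)
      else
        max (sSup (insert 0 (rank '' InPred S v)))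
          (sSup (insert 0 (rank '' CxtPred S EC v)) + 2))

/-- `k`-fold iterated exponential. -/
def iterExp : ℕ → ℕ → ℕ
  | 0, n => n
  | k + 1, n => 2 ^ iterExp k n

/-- `f` is a `k`-exponential function: bounded by the `k`-fold iterated exponential of a
polynomial (0-exponential means polynomial). -/
def KExpBounded (k : ℕ) (f : ℕ → ℕ) : Prop :=
  ∃ c e : ℕ, ∀ n, f n ≤ iterExp k (c * (n + 1) ^ e)

/-- `S` is arboreous (w.r.t. a rank system), with `scc S vhat` the unique SCC of maximal
rank and `conf` at most 1. -/
def Arboreous (S : Finset TGD) (EC : ℕ → EdgeSet) (rank : ℕ → ℕ) (vhat : ℕ) : Prop :=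
  RankSystem S EC rank ∧ LVertex S vhat ∧
  (∀ u, LVertex S u → rank u ≤ rank vhat) ∧
  (∀ u, LVertex S u → rank u = rank vhat → u ∈ scc S vhat) ∧
  confC S (scc S vhat) ≤ 1

/-- Edge `n ↠ m` of the null forest of `C`. -/
def NfEdge {S : Finset TGD} {D : Set Atom} (cs : ChaseSeq S D) (C : Set ℕ)
    (n m : ℕ) : Prop :=
  (∃ v ∈ C, NullVar cs n v) ∧ (∃ v ∈ C, NullVar cs m v) ∧
    ∃ x, ChaseEdge cs (Term.null n) x m

/-- `ρ` is an `Ê`-tgd: it has an existential variable that is the target of an `Ê`-edge. -/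
def IsETgd (Ehat : EdgeSet) (ρ : TGD) : Prop := ∃ e ∈ Ehat, e.2.2 ∈ ρ.exVars

/-- `V_Ê`: the existential variables in `C` occurring in some `Ê`-tgd. -/
def VEhat (S : Finset TGD) (C : Set ℕ) (Ehat : EdgeSet) : Set ℕ :=
  { v | v ∈ C ∧ ∃ ρ ∈ S, IsETgd Ehat ρ ∧ v ∈ ρ.exVars }

/-- `n` is a fresh null of chase step `i`. -/
def FreshAt {S : Finset TGD} {D : Set Atom} (cs : ChaseSeq S D) (i n : ℕ) : Prop :=
  ∃ st v, IntroducedAt cs n i st v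

/-- Step `i` applies an `Ê`-tgd. -/
def EStep {S : Finset TGD} {D : Set Atom} (cs : ChaseSeq S D) (Ehat : EdgeSet)
    (i : ℕ) : Prop :=
  ∃ st, cs.step i = some st ∧ IsETgd Ehat st.rule

/-- `N̂`: the nulls of variables in `C`. -/
def Nhat {S : Finset TGD} {D : Set Atom} (cs : ChaseSeq S D) (C : Set ℕ) : Set ℕ :=
  { n | ∃ v ∈ C, NullVar cs n v }

/-- `R̄`: nulls of `N̂` not introduced at any `Ê`-step. -/
def Rbar {S : Finset TGD} {D : Set Atom} (cs : ChaseSeq S D) (C : Set ℕ)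
    (Ehat : EdgeSet) : Set ℕ :=
  { n | n ∈ Nhat cs C ∧ ∀ i, EStep cs Ehat i → ¬ FreshAt cs i n }

/-- Membership in `F[i]`: the least set containing `R[i]` and closed under null-forest
edges into `R̄`. -/
inductive FsetMem {S : Finset TGD} {D : Set Atom} (cs : ChaseSeq S D) (C : Set ℕ)
    (Ehat : EdgeSet) (i : ℕ) : ℕ → Prop
  | base : ∀ {n}, FreshAt cs i n → FsetMem cs C Ehat i n
  | step : ∀ {n m}, FsetMem cs C Ehat i n → m ∈ Rbar cs C Ehat → NfEdge cs C n m →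
      FsetMem cs C Ehat i m

/-- `F[i]` as a set of terms. -/
def Fnode {S : Finset TGD} {D : Set Atom} (cs : ChaseSeq S D) (C : Set ℕ) (Ehat : EdgeSet)
    (i : ℕ) : Set Term :=
  { t | ∃ n, t = Term.null n ∧ FsetMem cs C Ehat i n }

/-- `𝓕`: the collection of the sets `F[i]` for `Ê`-steps `i`. -/
def Fcal {S : Finset TGD} {D : Set Atom} (cs : ChaseSeq S D) (C : Set ℕ)
    (Ehat : EdgeSet) : Set (Set Term) :=
  { X | ∃ i, EStep cs Ehat i ∧ X = Fnode cs C Ehat i }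

/-- `B₀`: all terms of the chase lying in no member of `𝓕`. -/
def B0 {S : Finset TGD} {D : Set Atom} (cs : ChaseSeq S D) (C : Set ℕ)
    (Ehat : EdgeSet) : Set Term :=
  { t | t ∈ chaseTerms cs ∧ ∀ X ∈ Fcal cs C Ehat, t ∉ X }

/-- The node set `N_∼` of the term tree. -/
def Nodes {S : Finset TGD} {D : Set Atom} (cs : ChaseSeq S D) (C : Set ℕ)
    (Ehat : EdgeSet) : Set (Set Term) :=
  insert (B0 cs C Ehat) (Fcal cs C Ehat)

/-- `F₁ ⇒ F₂` between members of `𝓕`. -/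
def FEdge0 {S : Finset TGD} {D : Set Atom} (cs : ChaseSeq S D) (C : Set ℕ) (Ehat : EdgeSet)
    (X Y : Set Term) : Prop :=
  X ∈ Fcal cs C Ehat ∧ Y ∈ Fcal cs C Ehat ∧ X ≠ Y ∧
    ∃ n m, Term.null n ∈ X ∧ Term.null m ∈ Y ∧ NfEdge cs C n m

/-- The edge relation `⇒` of the term tree (extended by edges from `B₀`). -/
def TEdge {S : Finset TGD} {D : Set Atom} (cs : ChaseSeq S D) (C : Set ℕ) (Ehat : EdgeSet)
    (X Y : Set Term) : Prop :=
  FEdge0 cs C Ehat X Y ∨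
    (X = B0 cs C Ehat ∧ Y ∈ Fcal cs C Ehat ∧ ∀ Z, ¬ FEdge0 cs C Ehat Z Y)

/-- `⇒*`. -/
def TReach {S : Finset TGD} {D : Set Atom} (cs : ChaseSeq S D) (C : Set ℕ)
    (Ehat : EdgeSet) : Set Term → Set Term → Prop :=
  Relation.ReflTransGen (TEdge cs C Ehat)

/-- The relation `⊴` on variables induced by a relation `R` on positions. -/
def TriRel (S : Finset TGD) (R : Pos → Pos → Prop) : ℕ → ℕ → Prop :=
  Relation.ReflTransGen (fun x y => ∃ ρ ∈ S, ∃ a ∈ ρ.body, ∃ i j : ℕ,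
    a.args[i]? = some (Term.var x) ∧ a.args[j]? = some (Term.var y) ∧
    R (a.pred, i) (a.pred, j))

/-- `R` satisfies the constraints (1)–(4) of Definition 6.4 on `⪯`. -/
def Admissible (S : Finset TGD) (C : Set ℕ) (Ehat : EdgeSet)
    (R : Pos → Pos → Prop) : Prop :=
  ∀ ρ ∈ S, ∀ a ∈ ρ.head, ∀ i j : ℕ, ∀ vi vj : ℕ,
    a.args[i]? = some (Term.var vi) → a.args[j]? = some (Term.var vj) →
    R (a.pred, i) (a.pred, j) →
      (¬ (vi ∈ ρ.exVars ∧ vi ∈ C ∧ vj ∈ ρ.exVars ∧ vj ∉ C)) ∧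
      (¬ (vi ∈ ρ.exVars ∧ vi ∈ VEhat S C Ehat ∧ vj ∈ ρ.frontier)) ∧
      (¬ (vi ∈ ρ.exVars ∧ vi ∈ C ∧ vj ∈ ρ.frontier ∧ vj ∉ labelSet S vi)) ∧
      (vi ∈ ρ.frontier → vj ∈ ρ.frontier → TriRel S R vi vj)

/-- `R` is the relation `⪯`: the largest relation satisfying constraints (1)–(4). -/
def IsPrecRel (S : Finset TGD) (C : Set ℕ) (Ehat : EdgeSet)
    (R : Pos → Pos → Prop) : Prop :=
  Admissible S C Ehat R ∧
    ∀ R' : Pos → Pos → Prop, Admissible S C Ehat R' → ∀ p q, R' p q → R p q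

/-- `Ω̂`: the `Ĉ`-affected positions. -/
def OmegaHat (S : Finset TGD) (C : Set ℕ) : Set Pos :=
  { pq | ∃ v ∈ C, ∃ ρ ∈ S, v ∈ ρ.exVars ∧ Omega S ρ v pq }

/-- The body variable `x` of `ρ` is `Ĉ`-affected. -/
def CAffected (S : Finset TGD) (C : Set ℕ) (ρ : TGD) (x : ℕ) : Prop :=
  x ∈ ρ.bodyVars ∧ ∀ pq ∈ posB ρ x, pq ∈ OmegaHat S C

/-- `S` is path-guarded (w.r.t. `Ĉ = C` and the relation `⊴` induced by `R = ⪯`). -/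
def PathGuarded (S : Finset TGD) (C : Set ℕ) (R : Pos → Pos → Prop) : Prop :=
  ∀ ρ ∈ S, ∀ x y : ℕ, CAffected S C ρ x → CAffected S C ρ y →
    TriRel S R x y ∨ TriRel S R y x

/-- The constants occurring in `S` and `D`. -/
def constsIn (S : Finset TGD) (D : Set Atom) : Set ℕ :=
  { c | (∃ a ∈ D, Term.const c ∈ a.args) ∨
        ∃ ρ ∈ S, ∃ a : Atom, (a ∈ ρ.body ∨ a ∈ ρ.head) ∧ Term.const c ∈ a.args }


/-- if `Σ` is arboreous, then `V_Ê ⊆ Ĉ`: every existential variable of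
every `Ê`-tgd lies in the unique maximal-rank SCC `Ĉ` of `ledgraph(Σ)`. -/
theorem statement13 (S : Finset TGD) (hra : RenamedApart S)
    (EC : ℕ → EdgeSet) (rank : ℕ → ℕ) (vhat : ℕ)
    (harb : Arboreous S EC rank vhat) :
    ∀ ρ ∈ S, IsETgd (EC vhat) ρ → ∀ w ∈ ρ.exVars, w ∈ scc S vhat := by
  rintro ρ hρ ⟨e, heE, hev⟩ w hw
  obtain ⟨hRS, hvV, hmax, huniq, _⟩ := harb
  obtain ⟨hsat, hECconst, hrconst, hreq⟩ := hRS
  have hsatv := hsat vhat hvV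
  -- e ∈ EC vhat gives EdgeInC
  have hEin : EdgeInC S (scc S vhat) e := hsatv.1 e heE
  obtain ⟨huC, hvC, hedge⟩ := hEin
  obtain ⟨u, x, v⟩ := e
  simp only at huC hvC hedge hev
  -- unpack the edge u →_x v
  obtain ⟨ρv, hρvS, ρw, hρwS, huex, hvex, hxfr, hOm⟩ := hedge
  -- renamed apart: ρw = ρ
  have hρeq : ρw = ρ := by
    by_contra hne
    have := hra ρw hρwS ρ hρ hne
    have hv1 : v ∈ ρw.allVars := Or.inr hvex.1
    have hv2 : v ∈ ρ.allVars := Or.inr hev.1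
    have : v ∈ ρw.allVars ∩ ρ.allVars := ⟨hv1, hv2⟩
    rw [hra ρw hρwS ρ hρ hne] at this
    exact this
  subst hρeq
  -- edge u →_x w
  have hedgew : LEdge S u x w := ⟨ρv, hρvS, ρw, hρwS, huex, hw, hxfr, hOm⟩
  have hLu : LVertex S u := ⟨ρv, hρvS, huex⟩
  have hLw : LVertex S w := ⟨ρw, hρwS, hw⟩
  by_cases hwC : w ∈ scc S vhat
  · exact hwC
  -- rank u = rank vhat
  have hru : rank u = rank vhat := hrconst u vhat huC
  -- u ∉ scc S w
  have hwself : w ∈ scc S w := ⟨Relation.ReflTransGen.refl, Relation.ReflTransGen.refl⟩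
  have hunw : u ∉ scc S w := by
    intro hu
    exact hwC ⟨hwself.1.trans (hu.2.trans huC.1), huC.2.trans (hu.1.trans hwself.2)⟩
  -- u ∈ InPred S w
  have hInPred : u ∈ InPred S w := ⟨hLu, hunw, x, w, hwself, hedgew⟩
  -- sSup bound
  have hbdd : BddAbove (insert 0 (rank '' InPred S w)) := by
    refine ⟨rank vhat, ?_⟩
    rintro n (rfl | ⟨z, hz, rfl⟩)
    · exact Nat.zero_le _
    · exact hmax z hz.1
  have hle : rank vhat ≤ sSup (insert 0 (rank '' InPred S w)) := by
    have : rank u ∈ insert 0 (rank '' InPred S w) := Or.inr ⟨u, hInPred, rfl⟩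
    rw [hru] at this
    exact le_csSup hbdd this
  have hweq : rank w = rank vhat := by
    have hwge : rank vhat ≤ rank w := by
      have heq := hreq w hLw
      rw [heq]
      split_ifs with h1 h2
      · exact hle
      · exact le_max_of_le_left hle
      · exact le_max_of_le_left hle
    exact le_antisymm (hmax w hLw) hwge
  exact absurd (huniq w hLw hweq) hwC

end ChasePaper
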